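/- arXiv:1404.0638 — 4 statements merged into one kernel-verified Lean document; each statement's English description precedes it below -/
import Mathlib

section
/- Define aₙ = ζ^{n-1}(a) where a = ψ₁ψ₂* and ζ(X) = ψ₁Xψ₁* − ψ₂Xψ₂*, with ψ₁, ψ₂ satisfying the Cuntz relations. Then for all m ≤ n, the anticommutator {aₘ, aₙ} = aₘaₙ + aₙaₘ = 0. -/
/-- For aₙ = ζ^[n-1] (ψ₁ψ₂*), the anticommutator {aₘ, aₙ} = 0 for all 1 ≤ m ≤ n. -/
theorem stmt_5 {A : Type*} [Ring A] [StarRing A] (ψ : Fin 2 → A)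
    (h_isom : ∀ i j : Fin 2, star (ψ i) * ψ j = if i = j then 1 else 0)
    (h_cuntz : ψ 0 * star (ψ 0) + ψ 1 * star (ψ 1) = 1)
    (a : ℕ → A)
    (ha : ∀ n, a n = (fun X => ψ 0 * X * star (ψ 0) - ψ 1 * X * star (ψ 1))^[n - 1]
      (ψ 0 * star (ψ 1))) :
    ∀ m n : ℕ, 1 ≤ m → m ≤ n → a m * a n + a n * a m = 0 := by
  set ζ : A → A := fun X => ψ 0 * X * star (ψ 0) - ψ 1 * X * star (ψ 1) with hζ
  have e00 : ∀ x : A, star (ψ 0) * (ψ 0 * x) = x := by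
    intro x; rw [← mul_assoc]; simpa using congrArg (· * x) (h_isom 0 0)
  have e11 : ∀ x : A, star (ψ 1) * (ψ 1 * x) = x := by
    intro x; rw [← mul_assoc]; simpa using congrArg (· * x) (h_isom 1 1)
  have e01 : ∀ x : A, star (ψ 0) * (ψ 1 * x) = 0 := by
    intro x; rw [← mul_assoc]; simpa using congrArg (· * x) (h_isom 0 1)
  have e10 : ∀ x : A, star (ψ 1) * (ψ 0 * x) = 0 := by
    intro x; rw [← mul_assoc]; simpa using congrArg (· * x) (h_isom 1 0)
  have key1 : ∀ X : A, (ψ 0 * star (ψ 1)) * ζ X + ζ X * (ψ 0 * star (ψ 1)) = 0 := by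
    intro X
    simp only [hζ, mul_sub, sub_mul, mul_assoc, e00, e01, e10, e11, mul_zero, zero_sub,
      sub_zero, mul_one]
    abel
  have hprod : ∀ X Y : A, ζ X * ζ Y
      = ψ 0 * (X * Y) * star (ψ 0) + ψ 1 * (X * Y) * star (ψ 1) := by
    intro X Y
    simp only [hζ, mul_sub, sub_mul, mul_assoc, e00, e01, e10, e11, mul_zero, zero_sub,
      sub_zero, sub_neg_eq_add]
  have key2 : ∀ X Y : A, X * Y + Y * X = 0 → ζ X * ζ Y + ζ Y * ζ X = 0 := by
    intro X Y hXY
    rw [hprod X Y, hprod Y X]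
    have : ψ 0 * (X * Y) * star (ψ 0) + ψ 1 * (X * Y) * star (ψ 1)
        + (ψ 0 * (Y * X) * star (ψ 0) + ψ 1 * (Y * X) * star (ψ 1))
        = ψ 0 * (X * Y + Y * X) * star (ψ 0) + ψ 1 * (X * Y + Y * X) * star (ψ 1) := by
      noncomm_ring
    rw [this, hXY]
    simp
  have hsucc : ∀ k : ℕ, a (k + 2) = ζ (a (k + 1)) := by
    intro k
    rw [ha (k + 2), ha (k + 1)]
    show ζ^[k + 1] _ = ζ (ζ^[k] _)
    rw [Function.iterate_succ_apply']
  have main : ∀ k d : ℕ, a (k + 1) * a (k + 1 + d) + a (k + 1 + d) * a (k + 1) = 0 := by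
    intro k
    induction k with
    | zero =>
      intro d
      have ha1 : a 1 = ψ 0 * star (ψ 1) := by rw [ha 1]; rfl
      cases d with
      | zero =>
        rw [ha1]
        have : (ψ 0 * star (ψ 1)) * (ψ 0 * star (ψ 1)) = 0 := by
          rw [mul_assoc, e10, mul_zero]
        rw [this]; simp
      | succ d' =>
        have : (0 : ℕ) + 1 + (d' + 1) = d' + 2 := by ring
        rw [this, hsucc d', ha1]
        exact key1 _
    | succ k ih =>
      intro d
      have h1 : k + 1 + 1 = k + 2 := by ring
      have h2 : k + 1 + 1 + d = (k + d) + 2 := by ring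
      have h3 : k + 1 + d = (k + d) + 1 := by ring
      rw [h1, h2, hsucc k, hsucc (k + d)]
      exact key2 _ _ (by rw [← h3]; exact ih d)
  intro m n hm hmn
  obtain ⟨k, rfl⟩ := Nat.exists_eq_add_of_le hm
  obtain ⟨d, rfl⟩ := Nat.exists_eq_add_of_le hmn
  simpa [Nat.add_comm] using main k d
end

section
/- Define aₙ = ζ^{n-1}(a) where a = ψ₁ψ₂* and ζ(X) = ψ₁Xψ₁* − ψ₂Xψ₂*, with ψ₁, ψ₂ satisfying the Cuntz relations. Then for all m ≠ n, aₘaₙ* + aₙ*aₘ = 0. -/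
/-- For aₙ = ζ^[n-1] (ψ₁ψ₂*), one has aₘaₙ* + aₙ*aₘ = 0 whenever m ≠ n. -/
theorem stmt_6 {A : Type*} [Ring A] [StarRing A] (ψ : Fin 2 → A)
    (h_isom : ∀ i j : Fin 2, star (ψ i) * ψ j = if i = j then 1 else 0)
    (h_cuntz : ψ 0 * star (ψ 0) + ψ 1 * star (ψ 1) = 1)
    (a : ℕ → A)
    (ha : ∀ n, a n = (fun X => ψ 0 * X * star (ψ 0) - ψ 1 * X * star (ψ 1))^[n - 1]
      (ψ 0 * star (ψ 1))) :
    ∀ m n : ℕ, 1 ≤ m → 1 ≤ n → m ≠ n → a m * star (a n) + star (a n) * a m = 0 := by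
  set ζ : A → A := fun X => ψ 0 * X * star (ψ 0) - ψ 1 * X * star (ψ 1) with hζ
  set a0 : A := ψ 0 * star (ψ 1) with ha0
  have prod : ∀ (i j k l : Fin 2) (u v : A),
      (ψ i * u * star (ψ j)) * (ψ k * v * star (ψ l)) =
        if j = k then ψ i * (u * v) * star (ψ l) else 0 := by
    intro i j k l u v
    have h1 : (ψ i * u * star (ψ j)) * (ψ k * v * star (ψ l))
        = ψ i * u * (star (ψ j) * ψ k) * (v * star (ψ l)) := by noncomm_ring
    rw [h1, h_isom]
    split <;> simp [mul_assoc]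
  have starζ : ∀ X : A, star (ζ X) = ψ 0 * star X * star (ψ 0) - ψ 1 * star X * star (ψ 1) := by
    intro X
    simp [hζ, star_sub, star_mul, mul_assoc]
  -- ζ preserves the anticommutation relation
  have key : ∀ x y : A, x * star y + star y * x = 0 →
      ζ x * star (ζ y) + star (ζ y) * ζ x = 0 := by
    intro x y h
    have hx : x * star y = -(star y * x) := eq_neg_of_add_eq_zero_left h
    rw [starζ]
    simp only [hζ]
    rw [sub_mul, mul_sub, mul_sub, sub_mul, mul_sub, mul_sub,
      prod, prod, prod, prod, prod, prod, prod, prod]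
    simp only [show ((0 : Fin 2) = 0) = True from by simp,
      show ((0 : Fin 2) = 1) = False from by simp,
      show ((1 : Fin 2) = 0) = False from by simp,
      show ((1 : Fin 2) = 1) = True from by simp, if_true, if_false]
    rw [hx]
    noncomm_ring
  -- base anticommutation: a0 with star (ζ X)
  have base1 : ∀ X : A, a0 * star (ζ X) + star (ζ X) * a0 = 0 := by
    intro X
    have ha0' : a0 = ψ 0 * 1 * star (ψ 1) := by rw [mul_one]
    rw [starζ, ha0', mul_sub, sub_mul, prod, prod, prod, prod]
    simp only [show ((1 : Fin 2) = 0) = False from by simp,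
      show ((1 : Fin 2) = 1) = True from by simp,
      show ((0 : Fin 2) = 0) = True from by simp, if_true, if_false]
    noncomm_ring
  -- main claim by induction
  have claim : ∀ d p : ℕ,
      ζ^[p] a0 * star (ζ^[p + d + 1] a0) + star (ζ^[p + d + 1] a0) * ζ^[p] a0 = 0 := by
    intro d p
    induction p with
    | zero =>
        simp only [Function.iterate_zero_apply, Nat.zero_add]
        rw [Function.iterate_succ_apply']
        exact base1 _
    | succ p ih =>
        have e : p + 1 + d + 1 = (p + d + 1) + 1 := by ring
        rw [e, Function.iterate_succ_apply', Function.iterate_succ_apply']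
        exact key _ _ ih
  intro m n hm hn hmn
  rw [ha m, ha n]
  rcases lt_or_gt_of_ne hmn with hlt | hgt
  · have e : n - 1 = (m - 1) + (n - m - 1) + 1 := by omega
    rw [e]
    exact claim _ _
  · have e : m - 1 = (n - 1) + (m - n - 1) + 1 := by omega
    have h := claim (m - n - 1) (n - 1)
    have h2 : star (ζ^[n - 1] a0 * star (ζ^[(n-1) + (m-n-1) + 1] a0)
        + star (ζ^[(n-1) + (m-n-1) + 1] a0) * ζ^[n - 1] a0) = 0 := by
      rw [h, star_zero]
    simp only [star_add, star_mul, star_star] at h2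
    rw [e]
    exact h2
end

section
/- Define aₙ = ζ^{n-1}(a) where a = ψ₁ψ₂* and ζ(X) = ψ₁Xψ₁* − ψ₂Xψ₂*, with ψ₁, ψ₂ satisfying the Cuntz relations. Then aₙaₙ* + aₙ*aₙ = 1 for all n ≥ 1. -/
/-- For aₙ = ζ^[n-1] (ψ₁ψ₂*), one has aₙaₙ* + aₙ*aₙ = 1 for all n ≥ 1. -/
theorem stmt_7 {A : Type*} [Ring A] [StarRing A] (ψ : Fin 2 → A)
    (h_isom : ∀ i j : Fin 2, star (ψ i) * ψ j = if i = j then 1 else 0)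
    (h_cuntz : ψ 0 * star (ψ 0) + ψ 1 * star (ψ 1) = 1)
    (a : ℕ → A)
    (ha : ∀ n, a n = (fun X => ψ 0 * X * star (ψ 0) - ψ 1 * X * star (ψ 1))^[n - 1]
      (ψ 0 * star (ψ 1))) :
    ∀ n : ℕ, 1 ≤ n → a n * star (a n) + star (a n) * a n = 1 := by
  have cross : ∀ (i j : Fin 2) (x y : A),
      (ψ i * x * star (ψ i)) * (ψ j * y * star (ψ j)) =
        if i = j then ψ i * (x * y) * star (ψ i) else 0 := by
    intro i j x y
    have : (ψ i * x * star (ψ i)) * (ψ j * y * star (ψ j)) =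
        ψ i * x * (star (ψ i) * ψ j) * (y * star (ψ j)) := by noncomm_ring
    rw [this, h_isom]
    split <;> rename_i h
    · subst h; noncomm_ring
    · simp
  have prod : ∀ x y : A, (ψ 0 * x * star (ψ 0) - ψ 1 * x * star (ψ 1)) *
      (ψ 0 * y * star (ψ 0) - ψ 1 * y * star (ψ 1)) =
      ψ 0 * (x * y) * star (ψ 0) + ψ 1 * (x * y) * star (ψ 1) := by
    intro x y
    rw [sub_mul, mul_sub, mul_sub, cross 0 0, cross 0 1, cross 1 0, cross 1 1]
    simp
  have key : ∀ m : ℕ,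
      ((fun X => ψ 0 * X * star (ψ 0) - ψ 1 * X * star (ψ 1))^[m] (ψ 0 * star (ψ 1))) *
        star ((fun X => ψ 0 * X * star (ψ 0) - ψ 1 * X * star (ψ 1))^[m] (ψ 0 * star (ψ 1))) +
      star ((fun X => ψ 0 * X * star (ψ 0) - ψ 1 * X * star (ψ 1))^[m] (ψ 0 * star (ψ 1))) *
        ((fun X => ψ 0 * X * star (ψ 0) - ψ 1 * X * star (ψ 1))^[m] (ψ 0 * star (ψ 1))) = 1 := by
    intro m
    induction m with
    | zero =>
        simp only [Function.iterate_zero, id_eq, star_mul, star_star]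
        have e1 : ψ 0 * star (ψ 1) * (ψ 1 * star (ψ 0)) = ψ 0 * star (ψ 0) := by
          have : ψ 0 * star (ψ 1) * (ψ 1 * star (ψ 0)) =
              ψ 0 * (star (ψ 1) * ψ 1) * star (ψ 0) := by noncomm_ring
          rw [this]
          have h11 : star (ψ 1) * ψ 1 = 1 := by simpa using h_isom 1 1
          rw [h11, mul_one]
        have e2 : ψ 1 * star (ψ 0) * (ψ 0 * star (ψ 1)) = ψ 1 * star (ψ 1) := by
          have : ψ 1 * star (ψ 0) * (ψ 0 * star (ψ 1)) =
              ψ 1 * (star (ψ 0) * ψ 0) * star (ψ 1) := by noncomm_ring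
          rw [this]
          have h00 : star (ψ 0) * ψ 0 = 1 := by simpa using h_isom 0 0
          rw [h00, mul_one]
        rw [e1, e2, h_cuntz]
    | succ k ih =>
        set b := (fun X => ψ 0 * X * star (ψ 0) - ψ 1 * X * star (ψ 1))^[k] (ψ 0 * star (ψ 1))
          with hb
        rw [Function.iterate_succ_apply', ← hb]
        have hstar : star (ψ 0 * b * star (ψ 0) - ψ 1 * b * star (ψ 1)) =
            ψ 0 * star b * star (ψ 0) - ψ 1 * star b * star (ψ 1) := by
          simp [star_sub, star_mul, star_star, mul_assoc]
        rw [hstar, prod, prod]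
        have : ψ 0 * (b * star b) * star (ψ 0) + ψ 1 * (b * star b) * star (ψ 1) +
            (ψ 0 * (star b * b) * star (ψ 0) + ψ 1 * (star b * b) * star (ψ 1)) =
            ψ 0 * (b * star b + star b * b) * star (ψ 0) +
            ψ 1 * (b * star b + star b * b) * star (ψ 1) := by noncomm_ring
        rw [this, ih, mul_one, mul_one, h_cuntz]
  intro n _
  rw [ha n]
  exact key (n - 1)
end

section
/- Let ψ₁, ψ₂ satisfy the Cuntz relations, ζ(X) = ψ₁Xψ₁* − ψ₂Xψ₂*, and ρ(X) = ψ₁Xψ₁* + ψ₂Xψ₂*. Then for every n ≥ 0 and all X, Y: ζⁿ(X)ζⁿ(Y) = ρⁿ(XY). -/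
/-- ζⁿ(X)ζⁿ(Y) = ρⁿ(XY) for all n ≥ 0. -/
theorem stmt_8 {A : Type*} [Ring A] [StarRing A] (ψ : Fin 2 → A)
    (h_isom : ∀ i j : Fin 2, star (ψ i) * ψ j = if i = j then 1 else 0)
    (h_cuntz : ψ 0 * star (ψ 0) + ψ 1 * star (ψ 1) = 1)
    (ζ ρ : A → A)
    (hζ : ∀ X, ζ X = ψ 0 * X * star (ψ 0) - ψ 1 * X * star (ψ 1))
    (hρ : ∀ X, ρ X = ψ 0 * X * star (ψ 0) + ψ 1 * X * star (ψ 1)) :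
    ∀ (n : ℕ) (X Y : A), ζ^[n] X * ζ^[n] Y = ρ^[n] (X * Y) := by
  have h00 : star (ψ 0) * ψ 0 = 1 := by simpa using h_isom 0 0
  have h01 : star (ψ 0) * ψ 1 = 0 := by simpa using h_isom 0 1
  have h10 : star (ψ 1) * ψ 0 = 0 := by simpa using h_isom 1 0
  have h11 : star (ψ 1) * ψ 1 = 1 := by simpa using h_isom 1 1
  have key : ∀ X Y : A, ζ X * ζ Y = ρ (X * Y) := by
    intro X Y
    rw [hζ, hζ, hρ, sub_mul, mul_sub, mul_sub]
    have e00 : (ψ 0 * X * star (ψ 0)) * (ψ 0 * Y * star (ψ 0)) = ψ 0 * (X * Y) * star (ψ 0) := by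
      simp only [mul_assoc]
      rw [← mul_assoc (star (ψ 0)) (ψ 0), h00, one_mul]
    have e01 : (ψ 0 * X * star (ψ 0)) * (ψ 1 * Y * star (ψ 1)) = 0 := by
      simp only [mul_assoc]
      rw [← mul_assoc (star (ψ 0)) (ψ 1), h01]
      simp
    have e10 : (ψ 1 * X * star (ψ 1)) * (ψ 0 * Y * star (ψ 0)) = 0 := by
      simp only [mul_assoc]
      rw [← mul_assoc (star (ψ 1)) (ψ 0), h10]
      simp
    have e11 : (ψ 1 * X * star (ψ 1)) * (ψ 1 * Y * star (ψ 1)) = ψ 1 * (X * Y) * star (ψ 1) := by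
      simp only [mul_assoc]
      rw [← mul_assoc (star (ψ 1)) (ψ 1), h11, one_mul]
    rw [e00, e01, e10, e11]
    abel
  intro n
  induction n with
  | zero => intro X Y; simp
  | succ n ih =>
    intro X Y
    rw [Function.iterate_succ_apply, Function.iterate_succ_apply,
      Function.iterate_succ_apply, ih, key]
end
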